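/- If G is a 2-connected chordal graph, then for every edge uv of G, the Δ-convex hull of {u, v} equals V(G). -/

import Mathlib

variable {V : Type*}

/-- `S` is Δ-convex: no vertex outside `S` is adjacent to two adjacent vertices of `S`. -/
def DeltaConvex (G : SimpleGraph V) (S : Set V) : Prop :=
  ∀ ⦃w u v : V⦄, u ∈ S → v ∈ S → G.Adj u v → G.Adj w u → G.Adj w v → w ∈ S

/-- The Δ-convex hull of `S`: the smallest Δ-convex set containing `S`. -/
def deltaHull (G : SimpleGraph V) (S : Set V) : Set V :=
  ⋂₀ {T : Set V | S ⊆ T ∧ DeltaConvex G T}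

/-- A cycle `c` has a chord: two vertices on the cycle are adjacent in `G`
but the edge between them is not an edge of the cycle. -/
def HasChord (G : SimpleGraph V) {v : V} (c : G.Walk v v) : Prop :=
  ∃ x y : V, x ∈ c.support ∧ y ∈ c.support ∧ G.Adj x y ∧ s(x, y) ∉ c.edges

/-- `G` is chordal: every cycle of length at least 4 has a chord. -/
def Chordal (G : SimpleGraph V) : Prop :=
  ∀ (v : V) (c : G.Walk v v), c.IsCycle → 4 ≤ c.length → HasChord G c

/-- `G` is 2-connected: at least 3 vertices and deleting any vertex leaves it connected. -/
def TwoConnected [Fintype V] (G : SimpleGraph V) : Prop :=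
  3 ≤ Fintype.card V ∧ ∀ v : V, (G.induce {u : V | u ≠ v}).Connected

/-! In a chordal graph a Δ-convex set containing both ends of an edge `xy`
contains every other `x`–`y` path: a chord `ab` of the cycle it closes splits it into two shorter
such paths, one using the edge `ab` (which puts `a` and `b` in the set) and one from `a` to `b`.
If a vertex is missing from the hull `H` of an edge, connectivity gives an edge `wt` with `w ∉ H`,
`t ∈ H`, and 2-connectivity a path from `w` back to `H` avoiding `t`. Closing it up by a path inside
`H`, which is connected, gives a path through `w` between `t` and one of its neighbours in `H`,
so `w ∈ H` after all. -/

open SimpleGraph Walk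

section DeltaHull

variable {G : SimpleGraph V}

lemma subset_deltaHull (S : Set V) : S ⊆ deltaHull G S :=
  fun _ hx _ hT => hT.1 hx

lemma deltaConvex_deltaHull (S : Set V) : DeltaConvex G (deltaHull G S) :=
  fun _ _ _ ha hb hab hwa hwb T hT => hT.2 (ha T hT) (hb T hT) hab hwa hwb

lemma deltaHull_subset {S T : Set V} (hST : S ⊆ T) (hT : DeltaConvex G T) :
    deltaHull G S ⊆ T :=
  fun _ hx => hx T ⟨hST, hT⟩

/-- The vertices joined to `S` inside `deltaHull G S` form a Δ-convex superset of `S`. -/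
lemma exists_walk_of_mem_deltaHull {S : Set V} {x : V} (hx : x ∈ deltaHull G S) :
    ∃ s ∈ S, ∃ p : G.Walk s x, ∀ z ∈ p.support, z ∈ deltaHull G S := by
  refine deltaHull_subset (T := {x | ∃ s ∈ S, ∃ p : G.Walk s x, ∀ z ∈ p.support, z ∈ deltaHull G S})
    (fun s hs => ⟨s, hs, nil, by simpa using subset_deltaHull S hs⟩) ?_ hx
  rintro w a b ⟨s, hs, p, hp⟩ ⟨_, _, pb, hpb⟩ hab hwa hwb
  have hw : w ∈ deltaHull G S := deltaConvex_deltaHull S (hp a p.end_mem_support)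
    (hpb b (end_mem_support _)) hab hwa hwb
  refine ⟨s, hs, p.concat hwa.symm, fun z hz => ?_⟩
  rw [support_concat, List.mem_append, List.mem_singleton] at hz
  rcases hz with hz | rfl
  exacts [hp z hz, hw]

lemma exists_walk_of_mem_deltaHull_pair {u v x y : V} (huv : G.Adj u v)
    (hx : x ∈ deltaHull G {u, v}) (hy : y ∈ deltaHull G {u, v}) :
    ∃ p : G.Walk x y, ∀ z ∈ p.support, z ∈ deltaHull G {u, v} := by
  obtain ⟨a, ha, p, hp⟩ := exists_walk_of_mem_deltaHull hx
  obtain ⟨b, hb, q, hq⟩ := exists_walk_of_mem_deltaHull hy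
  obtain ⟨r, hr⟩ : ∃ r : G.Walk a b, ∀ z ∈ r.support, z ∈ ({u, v} : Set V) := by
    rcases ha with rfl | rfl <;> rcases hb with rfl | rfl
    exacts [⟨nil, by simp⟩, ⟨huv.toWalk, by simp⟩, ⟨huv.symm.toWalk, by simp⟩, ⟨nil, by simp⟩]
  refine ⟨p.reverse.append (r.append q), fun z hz => ?_⟩
  simp only [mem_support_append_iff, support_reverse, List.mem_reverse] at hz
  rcases hz with hz | hz | hz
  exacts [hp z hz, subset_deltaHull _ (hr z hz), hq z hz]

end DeltaHull

namespace SimpleGraph.Walk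

variable {G : SimpleGraph V}

lemma two_le_length_of_ne_of_notMem_edges {a b : V} (p : G.Walk a b) (hab : a ≠ b)
    (hp : s(a, b) ∉ p.edges) : 2 ≤ p.length := by
  rcases p with _ | ⟨_, _ | ⟨_, _⟩⟩
  · exact absurd rfl hab
  · simp at hp
  · simp

lemma exists_append_append_of_mem_support {x y a b : V} (p : G.Walk x y)
    (ha : a ∈ p.support) (hb : b ∈ p.support) :
    ∃ a' b', s(a', b') = s(a, b) ∧ ∃ (p₁ : G.Walk x a') (p₂ : G.Walk a' b') (p₃ : G.Walk b' y),
      p = (p₁.append p₂).append p₃ := by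
  obtain ⟨q, r, rfl⟩ := mem_support_iff_exists_append.mp ha
  by_cases hbr : b ∈ r.support
  · obtain ⟨r₁, r₂, rfl⟩ := mem_support_iff_exists_append.mp hbr
    exact ⟨a, b, rfl, q, r₁, r₂, append_assoc _ _ _⟩
  · have hbq : b ∈ q.support := ((mem_support_append_iff _ _).mp hb).resolve_right hbr
    obtain ⟨q₁, q₂, rfl⟩ := mem_support_iff_exists_append.mp hbq
    exact ⟨b, a, Sym2.eq_swap, q₁, q₂, r, rfl⟩

lemma IsPath.append_of_support_inter {u v w : V} {p : G.Walk u v} {q : G.Walk v w}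
    (hp : p.IsPath) (hq : q.IsPath) (h : ∀ x ∈ p.support, x ∈ q.support → x = v) :
    (p.append q).IsPath := by
  have hq' := hq.support_nodup
  rw [← cons_tail_support] at hq'
  rw [isPath_def, support_append]
  refine hp.support_nodup.append (List.nodup_cons.mp hq').2 fun x hxp hxq => ?_
  exact (List.nodup_cons.mp hq').1 (h x hxp (List.mem_of_mem_tail hxq) ▸ hxq)

lemma IsPath.append_cons_of_append_append {x a b y : V} {p₁ : G.Walk x a} {p₂ : G.Walk a b}
    {p₃ : G.Walk b y} (hp : ((p₁.append p₂).append p₃).IsPath) (hab : G.Adj a b) :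
    (p₁.append (cons hab p₃)).IsPath := by
  rw [isPath_def] at hp ⊢
  refine hp.sublist ?_
  rw [support_append, support_append, support_append, support_cons, List.tail_cons,
    List.append_assoc, ← cons_tail_support p₃]
  refine List.Sublist.append_left ?_ _
  exact List.Sublist.append_right
    (List.singleton_sublist.mpr (end_mem_tail_support_of_ne hab.ne p₂)) _

lemma exists_isPath_to_first_mem {S : Set V} {a b : V} (p : G.Walk a b) (hb : b ∈ S) :
    ∃ s ∈ S, ∃ q : G.Walk a s, q.IsPath ∧ (∀ z ∈ q.support, z ∈ p.support) ∧
      ∀ z ∈ q.support, z ∈ S → z = s := by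
  suffices ∃ s ∈ S, ∃ q : G.Walk a s, (∀ z ∈ q.support, z ∈ p.support) ∧
      ∀ z ∈ q.support, z ∈ S → z = s by
    classical
    obtain ⟨s, hs, q, hqp, hqS⟩ := this
    have hsub := q.support_bypass_subset_support
    exact ⟨s, hs, q.bypass, q.bypass_isPath, fun z hz => hqp z (hsub hz),
      fun z hz => hqS z (hsub hz)⟩
  induction p with
  | nil => exact ⟨_, hb, nil, by simp, by simp⟩
  | @cons a m b h p ih =>
    by_cases ha : a ∈ S
    · exact ⟨a, ha, nil, by simp, by simp⟩
    obtain ⟨s, hs, q, hqp, hqS⟩ := ih hb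
    refine ⟨s, hs, cons h q, ?_, ?_⟩
    · simp only [support_cons, List.mem_cons, forall_eq_or_imp, true_or, true_and]
      exact fun z hz => Or.inr (hqp z hz)
    · simp only [support_cons, List.mem_cons, forall_eq_or_imp]
      exact ⟨fun h => absurd h ha, hqS⟩

end SimpleGraph.Walk

lemma SimpleGraph.Reachable.exists_walk_of_induce {G : SimpleGraph V} {s : Set V} {a b : s}
    (h : (G.induce s).Reachable a b) : ∃ p : G.Walk a b, ∀ z ∈ p.support, z ∈ s := by
  obtain ⟨p⟩ := h
  refine ⟨p.map (Embedding.induce s).toHom, fun z hz => ?_⟩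
  obtain ⟨z', -, rfl⟩ := List.mem_map.mp ((p.support_map _).symm ▸ hz)
  exact z'.2

section Chordal

variable {G : SimpleGraph V}

lemma DeltaConvex.support_subset_of_length_le_two {T : Set V} (hT : DeltaConvex G T)
    {x y : V} (hxy : G.Adj x y) (hx : x ∈ T) (hy : y ∈ T) (p : G.Walk x y)
    (hp : p.length ≤ 2) : ∀ z ∈ p.support, z ∈ T := by
  rcases p with _ | ⟨hxm, _ | ⟨hmy, _ | ⟨_, _⟩⟩⟩
  · simpa using hx
  · simp [hx, hy]
  · simp only [support_cons, support_nil, List.mem_cons, List.not_mem_nil, or_false]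
    rintro z (rfl | rfl | rfl)
    exacts [hx, hT hx hy hxy hxm.symm hmy, hy]
  · simp at hp

lemma Chordal.exists_chord_of_isPath (hG : Chordal G) {x y : V} (hxy : G.Adj x y)
    (p : G.Walk x y) (hp : p.IsPath) (hpxy : s(x, y) ∉ p.edges) (hlen : 3 ≤ p.length) :
    ∃ a b, G.Adj a b ∧ s(a, b) ≠ s(x, y) ∧ s(a, b) ∉ p.edges ∧
      ∃ (p₁ : G.Walk x a) (p₂ : G.Walk a b) (p₃ : G.Walk b y), p = (p₁.append p₂).append p₃ := by
  have hcycle : (cons hxy.symm p).IsCycle :=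
    (cons_isCycle_iff p hxy.symm).mpr ⟨hp, by rwa [Sym2.eq_swap]⟩
  obtain ⟨a, b, ha, hb, hab, hchord⟩ := hG y _ hcycle (by rw [length_cons]; omega)
  have hsupp : ∀ {z}, z ∈ (cons hxy.symm p).support → z ∈ p.support := by
    intro z hz
    rw [support_cons, List.mem_cons] at hz
    exact hz.elim (· ▸ p.end_mem_support) id
  obtain ⟨a', b', hab', p₁, p₂, p₃, rfl⟩ :=
    p.exists_append_append_of_mem_support (hsupp ha) (hsupp hb)
  rw [edges_cons, List.mem_cons, not_or] at hchord
  refine ⟨a', b', ?_, ?_, hab' ▸ hchord.2, p₁, p₂, p₃, rfl⟩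
  · rwa [← SimpleGraph.mem_edgeSet, hab', SimpleGraph.mem_edgeSet]
  · rw [hab', Sym2.eq_swap (a := x)]
    exact hchord.1

theorem Chordal.support_subset_of_isPath (hG : Chordal G) {T : Set V} (hT : DeltaConvex G T)
    {x y : V} (hxy : G.Adj x y) (hx : x ∈ T) (hy : y ∈ T) (p : G.Walk x y) (hp : p.IsPath)
    (hpxy : s(x, y) ∉ p.edges) : ∀ z ∈ p.support, z ∈ T := by
  induction hn : p.length using Nat.strong_induction_on generalizing x y with
  | _ n ih =>
  subst hn
  by_cases hlen : p.length ≤ 2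
  · exact hT.support_subset_of_length_le_two hxy hx hy p hlen
  obtain ⟨a, b, hab, hne, habp, p₁, p₂, p₃, rfl⟩ :=
    hG.exists_chord_of_isPath hxy p hp hpxy (by omega)
  simp only [edges_append, List.mem_append, not_or] at hpxy habp
  have h₂ : 2 ≤ p₂.length := p₂.two_le_length_of_ne_of_notMem_edges hab.ne habp.1.2
  have h₁₃ : 1 ≤ p₁.length + p₃.length := by
    by_contra! h
    obtain rfl := eq_of_length_eq_zero (p := p₁) (by omega)
    obtain rfl := eq_of_length_eq_zero (p := p₃) (by omega)
    exact hne rfl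
  simp only [length_append] at ih
  have hr := ih _ (by simp only [length_append, length_cons]; omega) hxy hx hy
    (p₁.append (cons hab p₃)) (hp.append_cons_of_append_append hab)
    (by simp only [edges_append, edges_cons, List.mem_append, List.mem_cons]; tauto) rfl
  simp only [support_append, support_cons, List.tail_cons, List.mem_append] at hr
  have ha : a ∈ T := hr a (.inl p₁.end_mem_support)
  have hb : b ∈ T := hr b (.inr p₃.start_mem_support)
  have hp₂ := ih _ (by omega) hab ha hb p₂ hp.of_append_left.of_append_right habp.1.2 rfl
  simp only [support_append, List.mem_append]
  rintro z ((hz | hz) | hz)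
  exacts [hr z (.inl hz), hp₂ z (List.mem_of_mem_tail hz), hr z (.inr (List.mem_of_mem_tail hz))]

lemma Chordal.mem_of_adj_of_walk_avoiding (hG : Chordal G) {T : Set V}
    (hT : DeltaConvex G T)
    (hconn : ∀ x ∈ T, ∀ y ∈ T, ∃ p : G.Walk x y, ∀ z ∈ p.support, z ∈ T)
    {w t y : V} (hwt : G.Adj w t) (ht : t ∈ T) (hy : y ∈ T) (W : G.Walk w y)
    (hW : t ∉ W.support) : w ∈ T := by
  classical
  by_contra hw
  obtain ⟨s, hs, q, hq, hqW, hqT⟩ := W.exists_isPath_to_first_mem hy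
  have hts : t ≠ s := fun h => hW (hqW t (h ▸ q.end_mem_support))
  obtain ⟨P, hP⟩ := hconn t ht s hs
  obtain ⟨c, htc, r, hPr⟩ := exists_eq_cons_of_ne hts P.bypass
  have hPpath := hPr ▸ P.bypass_isPath
  rw [cons_isPath_iff] at hPpath
  have hrT : ∀ z ∈ r.support, z ∈ T := fun z hz =>
    hP z (P.support_bypass_subset_support (hPr ▸ List.mem_cons_of_mem t hz))
  have hc : c ∈ T := hrT c r.start_mem_support
  have hqr : (q.append r.reverse).IsPath := by
    refine hq.append_of_support_inter hPpath.1.reverse fun z hzq hzr => hqT z hzq (hrT z ?_)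
    rwa [support_reverse, List.mem_reverse] at hzr
  have htqr : t ∉ (q.append r.reverse).support := by
    rw [mem_support_append_iff, support_reverse, List.mem_reverse, not_or]
    exact ⟨fun h => hW (hqW t h), hPpath.2⟩
  refine hw (hG.support_subset_of_isPath hT htc ht hc (cons hwt.symm (q.append r.reverse))
    ((cons_isPath_iff _ _).mpr ⟨hqr, htqr⟩) ?_ w (by simp))
  rw [edges_cons, List.mem_cons, not_or, Sym2.congr_right]
  exact ⟨fun h => hw (h ▸ hc), fun h => htqr (fst_mem_support_of_mem_edges _ h)⟩

end Chordal

lemma TwoConnected.exists_walk_avoiding [Fintype V] {G : SimpleGraph V} (hG : TwoConnected G)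
    {t a b : V} (ha : a ≠ t) (hb : b ≠ t) : ∃ p : G.Walk a b, t ∉ p.support := by
  obtain ⟨p, hp⟩ := ((hG.2 t).preconnected ⟨a, ha⟩ ⟨b, hb⟩).exists_walk_of_induce
  exact ⟨p, fun h => hp t h rfl⟩

theorem stmt_9 [Fintype V] (G : SimpleGraph V)
    (h2c : TwoConnected G) (hch : Chordal G) (u v : V) (huv : G.Adj u v) :
    deltaHull G {u, v} = Set.univ := by
  set H := deltaHull G {u, v}
  have hu : u ∈ H := subset_deltaHull _ (by simp)
  have hv : v ∈ H := subset_deltaHull _ (by simp)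
  refine Set.eq_univ_of_forall fun w₀ => by_contra fun hw₀ => ?_
  obtain ⟨W₀, -⟩ := h2c.exists_walk_avoiding (ne_of_mem_of_not_mem hu hw₀).symm huv.ne'
  obtain ⟨⟨⟨w, t⟩, hwt⟩, -, hw, ht⟩ :=
    W₀.exists_boundary_dart Hᶜ hw₀ (Set.notMem_compl_iff.mpr hv)
  rw [Set.notMem_compl_iff] at ht
  obtain ⟨z, hz, hzt⟩ : ∃ z ∈ H, z ≠ t := by
    by_cases hut : u = t
    exacts [⟨v, hv, hut ▸ huv.ne'⟩, ⟨u, hu, hut⟩]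
  obtain ⟨W, hW⟩ := h2c.exists_walk_avoiding (ne_of_mem_of_not_mem ht hw).symm hzt
  exact hw (hch.mem_of_adj_of_walk_avoiding (deltaConvex_deltaHull _)
    (fun x hx y hy => exists_walk_of_mem_deltaHull_pair huv hx hy) hwt ht hz W hW)
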